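/- arXiv:1810.08058 — 4 statements merged into one kernel-verified Lean document; each statement's English description precedes it below -/
import Mathlib

section
/- Let ω be a symplectic (nondegenerate alternating bilinear) form on ℝ^{2n} and let (e_1, …, e_{2n}) be a basis of ℝ^{2n}. Then there exists a permutation σ of {1, …, 2n} such that ω(e_{σ(2k−1)}, e_{σ(2k)}) ≠ 0 for every k = 1, …, n. -/
/-!
The Gram matrix `M` of `ω` in the basis `e` is skew-symmetric and invertible; we pair off its
indices by induction. Expanding `(M M⁻¹)ᵢᵢ = 1` gives `j` with `Mᵢⱼ ≠ 0` and `(M⁻¹)ⱼᵢ ≠ 0`, so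
`i ≠ j`. By Jacobi's complementary minor identity the principal minor of `M` on the remaining
indices is `det M · ((M⁻¹)ⱼᵢ)²`, because `M⁻¹` is again skew-symmetric; so it is nonzero and the
induction hypothesis pairs the remaining indices.
-/

universe u

def Equiv.pairSumCompl {α : Type*} [DecidableEq α] {i j : α} (hij : i ≠ j) :
    Fin 2 ⊕ {x // x ≠ i ∧ x ≠ j} ≃ α where
  toFun := Sum.elim ![i, j] Subtype.val
  invFun x := if hi : x = i then .inl 0 else if hj : x = j then .inl 1 else .inr ⟨x, hi, hj⟩
  left_inv := by
    rintro (k | ⟨x, hxi, hxj⟩)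
    · fin_cases k <;> simp [hij.symm]
    · simp [hxi, hxj]
  right_inv x := by
    by_cases hi : x = i
    · simp [hi]
    by_cases hj : x = j <;> simp [hi, hj, hij.symm]

namespace Matrix

theorem det_toBlocks₂₂_eq_det_mul_det_inv_toBlocks₁₁ {R m n : Type*} [CommRing R]
    [Fintype m] [Fintype n] [DecidableEq m] [DecidableEq n]
    (M : Matrix (m ⊕ n) (m ⊕ n) R) (hM : IsUnit M.det) :
    M.toBlocks₂₂.det = M.det * M⁻¹.toBlocks₁₁.det := by
  -- take determinants in `M * !![N₁₁, 0; N₂₁, 1] = !![1, M₁₂; 0, M₂₂]`, where `N = M⁻¹`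
  set N := M⁻¹
  have hblocks : M * N = 1 := M.mul_nonsing_inv hM
  rw [← fromBlocks_toBlocks M, ← fromBlocks_toBlocks N, fromBlocks_multiply,
    ← fromBlocks_one, fromBlocks_inj] at hblocks
  have key : M * fromBlocks N.toBlocks₁₁ 0 N.toBlocks₂₁ 1 =
      fromBlocks 1 M.toBlocks₁₂ 0 M.toBlocks₂₂ := by
    conv_lhs => rw [← fromBlocks_toBlocks M]
    rw [fromBlocks_multiply, hblocks.1, hblocks.2.2.1]
    simp
  simpa [det_fromBlocks_zero₁₂, det_fromBlocks_zero₂₁] using (congrArg det key).symm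

theorem inv_transpose_eq_neg_of_transpose_eq_neg {R n : Type*} [CommRing R] [Fintype n]
    [DecidableEq n] {M : Matrix n n R} (hM : Mᵀ = -M) (hdet : IsUnit M.det) :
    M⁻¹ᵀ = -M⁻¹ := by
  rw [transpose_nonsing_inv, hM]
  exact inv_eq_right_inv (by rw [neg_mul_neg, mul_nonsing_inv _ hdet])

theorem apply_self_eq_zero_of_transpose_eq_neg {K n : Type*} [Field K] (hK : ringChar K ≠ 2)
    {M : Matrix n n K} (hM : Mᵀ = -M) (i : n) : M i i = 0 :=
  (Ring.eq_self_iff_eq_zero_of_char_ne_two hK).mp (congrFun (congrFun hM i) i).symm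

theorem exists_ne_zero_and_inv_ne_zero {R n : Type*} [CommRing R] [Nontrivial R] [Fintype n]
    [DecidableEq n] (M : Matrix n n R) (hdet : IsUnit M.det) (i : n) :
    ∃ j, M i j ≠ 0 ∧ M⁻¹ j i ≠ 0 := by
  have hii : ∑ j, M i j * M⁻¹ j i ≠ 0 := by
    rw [← mul_apply, mul_nonsing_inv _ hdet, one_apply_eq]
    exact one_ne_zero
  obtain ⟨j, -, hj⟩ := Finset.exists_ne_zero_of_sum_ne_zero hii
  exact ⟨j, left_ne_zero_of_mul hj, right_ne_zero_of_mul hj⟩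

variable {K : Type*} [Field K] {ι : Type u} [Fintype ι] [DecidableEq ι]

theorem det_submatrix_compl_pair_ne_zero (hK : ringChar K ≠ 2) {M : Matrix ι ι K}
    (hM : Mᵀ = -M) (hdet : M.det ≠ 0) {i j : ι} (hij : i ≠ j) (hji : M⁻¹ j i ≠ 0) :
    (M.submatrix (Subtype.val : {x // x ≠ i ∧ x ≠ j} → ι) Subtype.val).det ≠ 0 := by
  set E := Equiv.pairSumCompl hij
  have hunit : IsUnit (M.submatrix E E).det := by
    rw [det_submatrix_equiv_self]
    exact isUnit_iff_ne_zero.mpr hdet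
  have hN := inv_transpose_eq_neg_of_transpose_eq_neg hM (isUnit_iff_ne_zero.mpr hdet)
  have hpair : ((M.submatrix E E)⁻¹.toBlocks₁₁).det = M⁻¹ j i ^ 2 := by
    rw [inv_submatrix_equiv, det_fin_two]
    change M⁻¹ i i * M⁻¹ j j - M⁻¹ i j * M⁻¹ j i = _
    rw [apply_self_eq_zero_of_transpose_eq_neg hK hN,
      show M⁻¹ i j = -M⁻¹ j i from congrFun (congrFun hN j) i]
    ring
  have hjacobi := det_toBlocks₂₂_eq_det_mul_det_inv_toBlocks₁₁ _ hunit
  rw [hpair, det_submatrix_equiv_self] at hjacobi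
  rw [show M.submatrix Subtype.val Subtype.val = (M.submatrix E E).toBlocks₂₂ from rfl, hjacobi]
  exact mul_ne_zero hdet (pow_ne_zero 2 hji)

theorem exists_pairing_of_transpose_eq_neg (hK : ringChar K ≠ 2) (M : Matrix ι ι K)
    (hM : Mᵀ = -M) (hdet : M.det ≠ 0) :
    ∃ (α : Type u) (p : α × Fin 2 ≃ ι), ∀ a, M (p (a, 0)) (p (a, 1)) ≠ 0 := by
  induction h : Fintype.card ι using Nat.strong_induction_on generalizing ι with
  | _ N ih =>
  cases isEmpty_or_nonempty ι with
  | inl => exact ⟨PEmpty, Equiv.equivOfIsEmpty _ _, fun a => a.elim⟩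
  | inr hne =>
  obtain ⟨i⟩ := hne
  obtain ⟨j, hij, hji⟩ := exists_ne_zero_and_inv_ne_zero M (isUnit_iff_ne_zero.mpr hdet) i
  have hne : i ≠ j := by
    rintro rfl
    exact hij (apply_self_eq_zero_of_transpose_eq_neg hK hM i)
  have hcard : Fintype.card {x // x ≠ i ∧ x ≠ j} < N :=
    h ▸ Fintype.card_subtype_lt (x := i) (by simp)
  obtain ⟨α, p, hp⟩ := ih _ hcard (M.submatrix Subtype.val Subtype.val)
    (by rw [transpose_submatrix, hM]; rfl)
    (det_submatrix_compl_pair_ne_zero hK hM hdet hne hji) rfl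
  refine ⟨Unit ⊕ α, (Equiv.sumProdDistrib _ _ _).trans
    ((Equiv.sumCongr (Equiv.uniqueProd _ _) p).trans (Equiv.pairSumCompl hne)), ?_⟩
  rintro (⟨⟩ | a)
  · simpa [Equiv.pairSumCompl] using hij
  · simpa [Equiv.pairSumCompl] using hp a

end Matrix

open Matrix in
theorem LinearMap.BilinForm.exists_pairing_of_isAlt {K V : Type*} {ι : Type u} [Field K]
    [AddCommGroup V] [Module K V] [Fintype ι] [DecidableEq ι] (hK : ringChar K ≠ 2)
    {B : LinearMap.BilinForm K V} (hB : B.IsAlt) (hsep : B.SeparatingLeft)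
    (b : Module.Basis ι K V) :
    ∃ (α : Type u) (p : α × Fin 2 ≃ ι), ∀ a, B (b (p (a, 0))) (b (p (a, 1))) ≠ 0 := by
  have hskew : (toMatrix b B)ᵀ = -toMatrix b B := by
    ext i j
    simp [toMatrix_apply, ← LinearMap.IsAlt.neg hB (b i) (b j)]
  have hdet : (toMatrix b B).det ≠ 0 :=
    Matrix.separatingLeft_iff_det_ne_zero.mp ((separatingLeft_toMatrix_iff b).mpr hsep)
  simpa [toMatrix_apply] using (toMatrix b B).exists_pairing_of_transpose_eq_neg hK hskew hdet

theorem exists_perm_consecutive_pairs {α : Type*} {n : ℕ} (p : α × Fin 2 ≃ Fin (2 * n)) :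
    ∃ (σ : Equiv.Perm (Fin (2 * n))) (g : Fin n → α), ∀ k : Fin n,
      σ ⟨2 * k, by omega⟩ = p (g k, 0) ∧ σ ⟨2 * k + 1, by omega⟩ = p (g k, 1) := by
  have : Finite (α × Fin 2) := .of_equiv _ p.symm
  have : Finite α := .prod_left (Fin 2)
  have hcard : Nat.card α = n := by
    have := Nat.card_congr p
    simp only [Nat.card_prod, Nat.card_eq_fintype_card, Fintype.card_fin] at this
    omega
  let g : Fin n ≃ α := (finCongr hcard.symm).trans (Finite.equivFin α).symm
  let T : Fin (2 * n) ≃ Fin n × Fin 2 := (finCongr (mul_comm 2 n)).trans finProdFinEquiv.symm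
  refine ⟨T.trans ((g.prodCongr (Equiv.refl _)).trans p), g, fun k => ?_⟩
  simp [T, Fin.divNat, Fin.modNat, Nat.mul_add_div]

theorem stmt_0 (n : ℕ)
    (ω : (Fin (2*n) → ℝ) →ₗ[ℝ] (Fin (2*n) → ℝ) →ₗ[ℝ] ℝ)
    (halt : ∀ v, ω v v = 0)
    (hnd : ∀ v, v ≠ 0 → ∃ w, ω v w ≠ 0)
    (e : Module.Basis (Fin (2*n)) ℝ (Fin (2*n) → ℝ)) :
    ∃ σ : Equiv.Perm (Fin (2*n)),
      ∀ k : Fin n,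
        ω (e (σ ⟨2*k.val, by have := k.2; omega⟩))
          (e (σ ⟨2*k.val+1, by have := k.2; omega⟩)) ≠ 0 := by
  have hsep : ω.SeparatingLeft := fun v hv => by
    by_contra hv0
    obtain ⟨w, hw⟩ := hnd v hv0
    exact hw (hv w)
  obtain ⟨α, p, hp⟩ := LinearMap.BilinForm.exists_pairing_of_isAlt (by simp) halt hsep e
  obtain ⟨σ, g, hσ⟩ := exists_perm_consecutive_pairs p
  exact ⟨σ, fun k => by rw [(hσ k).1, (hσ k).2]; exact hp (g k)⟩
end

section
/- Let F be a symmetric bilinear form on a finite-dimensional 𝔽₂-vector space V of dimension b, with matrix (F_{ij}) in some basis. Then the determinant of this matrix over 𝔽₂ equals Σ Π_{j=1}^{q} F(P_j), where the sum is over all partitions P_1 ∪ ⋯ ∪ P_q = {1,…,b} into subsets of size one or two, with the convention F({i}) = F_{ii} and F({i,j}) = F_{ij}. -/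
/-!
Over a ring of characteristic two every sign in the Leibniz expansion of the determinant is `1`.
For a symmetric matrix the terms of `σ` and `σ⁻¹` coincide, so they cancel in pairs and only the
involutions `σ = σ⁻¹` survive.
-/

open Finset Equiv

theorem CharTwo.sum_eq_sum_filter_apply_eq_self {ι R : Type*} [Fintype ι] [Ring R] [CharP R 2]
    (g : ι → ι) (hg : Function.Involutive g) [DecidablePred fun x => g x = x]
    (f : ι → R) (hf : ∀ x, f (g x) = f x) :
    ∑ x, f x = ∑ x with g x = x, f x := by
  rw [← sum_filter_add_sum_filter_not univ (fun x => g x = x), add_eq_left]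
  refine sum_involution (fun x _ => g x) (fun x _ => by rw [hf, CharTwo.add_self_eq_zero])
    (fun x hx _ => (mem_filter.mp hx).2) (fun x hx => ?_) (fun x _ => hg x)
  simp only [mem_filter, mem_univ, true_and, hg x] at hx ⊢
  exact fun h => hx h.symm

theorem Matrix.det_eq_sum_prod_of_charTwo {n R : Type*} [Fintype n] [DecidableEq n]
    [CommRing R] [CharP R 2] (M : Matrix n n R) :
    M.det = ∑ σ : Perm n, ∏ i, M (σ i) i := by
  rw [det_apply']
  refine sum_congr rfl fun σ _ => ?_
  rcases Int.units_eq_one_or (Perm.sign σ) with h | h <;> simp [h, CharTwo.neg_eq]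

theorem Matrix.IsSymm.prod_apply_perm_inv {n R : Type*} [Fintype n] [CommMonoid R]
    {M : Matrix n n R} (hM : M.IsSymm) (σ : Perm n) :
    ∏ i, M i (σ⁻¹ i) = ∏ i, M i (σ i) := by
  rw [← Equiv.prod_comp σ]
  simp only [Perm.coe_inv, symm_apply_apply]
  exact prod_congr rfl fun i _ => hM.apply i (σ i)

theorem Matrix.IsSymm.det_eq_sum_involutions_of_charTwo {n R : Type*} [Fintype n]
    [DecidableEq n] [CommRing R] [CharP R 2] {M : Matrix n n R} (hM : M.IsSymm) :
    M.det = ∑ σ ∈ univ.filter (fun σ : Perm n => σ * σ = 1), ∏ i, M i (σ i) := by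
  have hsum : M.det = ∑ σ : Perm n, ∏ i, M i (σ i) := by
    rw [det_eq_sum_prod_of_charTwo]
    exact sum_congr rfl fun σ _ => prod_congr rfl fun i _ => hM.apply i (σ i)
  rw [hsum, CharTwo.sum_eq_sum_filter_apply_eq_self _ inv_involutive _ hM.prod_apply_perm_inv]
  exact sum_congr (filter_congr fun σ _ => inv_eq_iff_mul_eq_one) fun _ _ => rfl

/-- Milnor's formula over `𝔽₂`: the determinant of the matrix of a symmetric bilinear
form equals the sum over partitions of `{1,…,b}` into one- and two-element subsets of the
products `∏ⱼ F(Pⱼ)`.  Such partitions correspond exactly to involutions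
`σ : Perm (Fin b)` (the two-element blocks being the `2`-cycles of `σ`), and over `𝔽₂`
(where `x^2 = x`) the product `∏ⱼ F(Pⱼ)` equals `∏ i, F (e i) (e (σ i))`. -/
theorem stmt_2 (b : ℕ) (Vec : Type*) [AddCommGroup Vec] [Module (ZMod 2) Vec]
    (F : LinearMap.BilinForm (ZMod 2) Vec)
    (hsym : ∀ x y, F x y = F y x)
    (e : Module.Basis (Fin b) (ZMod 2) Vec) :
    (Matrix.of fun i j => F (e i) (e j)).det =
      ∑ σ ∈ Finset.univ.filter (fun σ : Equiv.Perm (Fin b) => σ * σ = 1),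
        ∏ i, F (e i) (e (σ i)) :=
  (Matrix.IsSymm.ext fun i j => hsym (e j) (e i)).det_eq_sum_involutions_of_charTwo
end

section
/- Let Γ be a finite connected metric graph with first Betti number b ≥ 2 (so b = |E| − |V| + 1), edge lengths ℓ : E → ℝ_{>0}, and total length ℓ(Γ). Assuming the Bollobás–Szemerédi–Thomason systolic inequality (there exists a cycle of length at most 4·(log₂ b)/(b−1)·ℓ(Γ) which is nontrivial in H₁(Γ; ℤ₂)), there exist cycles γ_1, …, γ_b forming a ℤ₂-homology basis of Γ with Π_{k=1}^{b} ℓ(γ_k) ≤ (4^{b−1}/(b−1)!) · (Π_{k=2}^{b} log₂ k) · ℓ(Γ)^b. -/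
open Finset

/-- The `ℤ₂`-chain of a closed walk: the indicator function of its edge set,
viewed as an element of the edge space `Sym2 V → ℤ₂`. -/
def walkChain {V : Type*} [DecidableEq V] {G : SimpleGraph V} {v : V}
    (w : G.Walk v v) : Sym2 V → ZMod 2 :=
  fun e => if e ∈ w.edges then 1 else 0

/-- The cycle space `H₁(Γ; ℤ₂)` of a graph: the span of the chains of its cycles. -/
def cycleSpace {V : Type*} [DecidableEq V] (G : SimpleGraph V) :
    Submodule (ZMod 2) (Sym2 V → ZMod 2) :=
  Submodule.span (ZMod 2)
    {x | ∃ (v : V) (w : G.Walk v v), w.IsCycle ∧ x = walkChain w}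

/-- The length of a cycle: the sum of the lengths of its edges. -/
noncomputable def walkLen {V : Type*} [DecidableEq V] {G : SimpleGraph V} {v : V}
    (ℓ : Sym2 V → ℝ) (w : G.Walk v v) : ℝ :=
  ∑ e ∈ w.edges.toFinset, ℓ e

/-!
Induction on `b`. The systolic inequality gives a cycle `W` of length at most
`4 log₂ b / (b - 1) · ℓ(Γ)`. Deleting an edge `e` of `W` leaves a connected graph `Γ'` of Betti
number `b - 1` and total length at most `ℓ(Γ)`; a basis of `H₁(Γ'; ℤ₂)` given by induction,
together with `W`, is a basis of `H₁(Γ; ℤ₂)`. Indeed `W` is the only one of these cycles through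
`e`, and rerouting every traversal of `e` along `W - e` turns any cycle of `Γ` into a closed walk
of `Γ'` whose chain differs from it by a multiple of `W`. The factors `4 log₂ k / (k - 1)`,
`2 ≤ k ≤ b`, multiply to the constant of the theorem.
-/

noncomputable def systolicConstant (b : ℕ) : ℝ :=
  4 ^ (b - 1) / ((b - 1).factorial : ℝ) * ∏ k ∈ Icc 2 b, Real.logb 2 k

lemma systolicConstant_nonneg (b : ℕ) : 0 ≤ systolicConstant b := by
  refine mul_nonneg (by positivity) (prod_nonneg fun k hk => Real.logb_nonneg one_lt_two ?_)
  exact_mod_cast (by simp at hk; omega : 1 ≤ k)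

lemma systolicConstant_zero : systolicConstant 0 = 1 := by
  simp [systolicConstant]

lemma systolicConstant_one : systolicConstant 1 = 1 := by
  simp [systolicConstant]

lemma systolicConstant_succ {b : ℕ} (hb : 1 ≤ b) :
    systolicConstant (b + 1) = 4 * Real.logb 2 (b + 1) / b * systolicConstant b := by
  obtain ⟨m, rfl⟩ : ∃ m, b = m + 1 := ⟨b - 1, by omega⟩
  simp only [systolicConstant, Nat.add_sub_cancel, prod_Icc_succ_top (by omega : 2 ≤ m + 1 + 1),
    Nat.factorial_succ, pow_succ]
  push_cast
  field_simp

namespace SimpleGraph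

variable {V : Type*} {G : SimpleGraph V}

lemma Connected.isAcyclic_iff_ncard_edgeSet [Finite V] (hG : G.Connected) :
    G.IsAcyclic ↔ G.edgeSet.ncard + 1 = Nat.card V := by
  rw [← Nat.card_coe_set_eq]
  exact ⟨fun h => (isTree_iff_connected_and_card.mp ⟨hG, h⟩).2,
    fun h => (isTree_iff_connected_and_card.mpr ⟨hG, h⟩).isAcyclic⟩

lemma ncard_edgeSet_deleteEdges_add_one [Finite V] {e : Sym2 V} (he : e ∈ G.edgeSet) :
    (G.deleteEdges {e}).edgeSet.ncard + 1 = G.edgeSet.ncard := by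
  rw [edgeSet_deleteEdges]
  exact Set.ncard_sdiff_singleton_add_one he G.edgeSet.toFinite

noncomputable def totalLength [Finite V] (G : SimpleGraph V) (ℓ : Sym2 V → ℝ) : ℝ :=
  ∑ e ∈ G.edgeSet.toFinite.toFinset, ℓ e

lemma totalLength_nonneg [Finite V] {ℓ : Sym2 V → ℝ} (hℓ : ∀ e ∈ G.edgeSet, 0 ≤ ℓ e) :
    0 ≤ totalLength G ℓ :=
  sum_nonneg fun e he => hℓ e (by simpa using he)

lemma totalLength_mono [Finite V] {ℓ : Sym2 V → ℝ} {H : SimpleGraph V}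
    (hℓ : ∀ e ∈ H.edgeSet, 0 ≤ ℓ e) (hGH : G ≤ H) : totalLength G ℓ ≤ totalLength H ℓ :=
  sum_le_sum_of_subset_of_nonneg (fun e he => by simpa using edgeSet_mono hGH (by simpa using he))
    (fun e he _ => hℓ e (by simpa using he))

variable [DecidableEq V]

namespace Walk

/-- Unlike `walkChain`, this counts edges with multiplicity, so it is additive under `append`. -/
def edgeChain {u v : V} (p : G.Walk u v) : Sym2 V → ZMod 2 :=
  fun e => (p.edges.count e : ZMod 2)

@[simp] lemma edgeChain_nil {u : V} : (nil : G.Walk u u).edgeChain = 0 := by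
  funext e; simp [edgeChain]

@[simp] lemma edgeChain_cons {u v w : V} (h : G.Adj u v) (p : G.Walk v w) :
    (cons h p).edgeChain = Pi.single s(u, v) 1 + p.edgeChain := by
  funext e
  by_cases he : e = s(u, v) <;> simp [edgeChain, he, Ne.symm, add_comm]

@[simp] lemma edgeChain_append {u v w : V} (p : G.Walk u v) (q : G.Walk v w) :
    (p.append q).edgeChain = p.edgeChain + q.edgeChain := by
  funext e; simp [edgeChain, List.count_append]

@[simp] lemma edgeChain_reverse {u v : V} (p : G.Walk u v) : p.reverse.edgeChain = p.edgeChain := by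
  funext e; simp [edgeChain, edges_reverse, List.count_reverse]

@[simp] lemma edgeChain_transfer {H : SimpleGraph V} {u v : V} (p : G.Walk u v) (hp) :
    (p.transfer H hp).edgeChain = p.edgeChain := by
  funext e; simp [edgeChain, edges_transfer]

lemma walkChain_eq_edgeChain {u : V} {p : G.Walk u u} (hp : p.IsTrail) :
    walkChain p = p.edgeChain := by
  funext e
  by_cases he : e ∈ p.edges
  · simp [walkChain, edgeChain, he, List.count_eq_one_of_mem hp.edges_nodup he]
  · simp [walkChain, edgeChain, he, List.count_eq_zero.mpr he]

@[simp] lemma walkChain_mapLe {H : SimpleGraph V} (hGH : G ≤ H) {u : V} (p : G.Walk u u) :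
    walkChain (p.mapLe hGH) = walkChain p := by
  unfold walkChain; rw [edges_mapLe_eq_edges]

@[simp] lemma walkLen_mapLe {H : SimpleGraph V} (hGH : G ≤ H) (ℓ : Sym2 V → ℝ) {u : V}
    (p : G.Walk u u) : walkLen ℓ (p.mapLe hGH) = walkLen ℓ p := by
  unfold walkLen; rw [edges_mapLe_eq_edges]

lemma edgeChain_cons_mem_cycleSpace {u v : V} (h : G.Adj u v) {q : G.Walk v u}
    (hq : q.IsPath) : (cons h q).edgeChain ∈ cycleSpace G := by
  by_cases he : s(u, v) ∈ q.edges
  · cases q with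
    | nil => exact absurd rfl h.ne
    | @cons _ w _ h' q' =>
      obtain ⟨hq', hv⟩ := (cons_isPath_iff h' q').mp hq
      rcases List.mem_cons.mp he with he | he
      · -- the closed walk is the backtrack `u → v → u`
        obtain rfl : w = u := by
          rcases Sym2.eq_iff.mp he with ⟨rfl, -⟩ | ⟨rfl, -⟩
          · exact absurd rfl h.ne
          · rfl
        obtain rfl := (isPath_iff_nil.mp hq').eq_nil
        rw [edgeChain_cons, edgeChain_cons, edgeChain_nil, add_zero, Sym2.eq_swap,
          ← two_smul (ZMod 2), show (2 : ZMod 2) = 0 from rfl, zero_smul]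
        exact zero_mem _
      · exact absurd (q'.snd_mem_support_of_mem_edges he) hv
  · have hcyc := (cons_isCycle_iff q h).mpr ⟨hq, he⟩
    exact walkChain_eq_edgeChain hcyc.isTrail ▸ Submodule.subset_span ⟨u, _, hcyc, rfl⟩

/-- Each step of `bypass` cuts off a closed walk `cons h q` with `q` a path. -/
lemma edgeChain_sub_edgeChain_bypass_mem_cycleSpace {u v : V} (p : G.Walk u v) :
    p.edgeChain - p.bypass.edgeChain ∈ cycleSpace G := by
  induction p with
  | nil => simp [bypass]
  | @cons u y _ h p ih =>
    rw [bypass]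
    split_ifs with hu
    · have hsplit := congrArg edgeChain (p.bypass.take_spec hu)
      rw [edgeChain_append] at hsplit
      have : (cons h p).edgeChain - (p.bypass.dropUntil u hu).edgeChain =
          (p.edgeChain - p.bypass.edgeChain) + (cons h (p.bypass.takeUntil u hu)).edgeChain := by
        rw [edgeChain_cons, edgeChain_cons, ← hsplit]
        abel
      rw [this]
      exact add_mem ih (edgeChain_cons_mem_cycleSpace h (p.bypass_isPath.takeUntil hu))
    · simpa using ih

lemma edgeChain_mem_cycleSpace {u : V} (p : G.Walk u u) : p.edgeChain ∈ cycleSpace G := by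
  simpa [(isPath_iff_nil.mp p.bypass_isPath).eq_nil] using
    edgeChain_sub_edgeChain_bypass_mem_cycleSpace p

/-- Every traversal of the edge `s(u, z)` is replaced by the detour `t`. -/
lemma exists_edgeChain_sub_mem_span_deleteEdges {u z : V} (h : G.Adj u z) {t : G.Walk z u}
    (ht : s(u, z) ∉ t.edges) {a b : V} (p : G.Walk a b) :
    ∃ q : (G.deleteEdges {s(u, z)}).Walk a b,
      p.edgeChain - q.edgeChain ∈ Submodule.span (ZMod 2) {(cons h t).edgeChain} := by
  have hdetour : Pi.single s(u, z) 1 - t.edgeChain ∈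
      Submodule.span (ZMod 2) {(cons h t).edgeChain} := by
    have hneg : -t.edgeChain = t.edgeChain := funext fun _ => ZMod.neg_eq_self_mod_two _
    rw [edgeChain_cons, sub_eq_add_neg, hneg]
    exact Submodule.mem_span_singleton_self _
  induction p with
  | nil => exact ⟨nil, by simp⟩
  | @cons a c _ h' p ih =>
    obtain ⟨q, hq⟩ := ih
    by_cases hac : s(a, c) = s(u, z)
    · rcases Sym2.eq_iff.mp hac with ⟨rfl, rfl⟩ | ⟨rfl, rfl⟩
      · refine ⟨(t.toDeleteEdge _ ht).reverse.append q, ?_⟩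
        convert add_mem hq hdetour using 1
        simp only [edgeChain_cons, edgeChain_append, edgeChain_reverse, edgeChain_transfer]
        abel
      · refine ⟨(t.toDeleteEdge _ ht).append q, ?_⟩
        convert add_mem hq hdetour using 1
        simp only [edgeChain_cons, edgeChain_append, edgeChain_transfer, Sym2.eq_swap]
        abel
    · refine ⟨cons (deleteEdges_adj.mpr ⟨h', hac⟩) q, ?_⟩
      simpa only [edgeChain_cons, add_sub_add_left_eq_sub] using hq

end Walk

lemma cycleSpace_mono {H : SimpleGraph V} (hGH : G ≤ H) : cycleSpace G ≤ cycleSpace H := by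
  refine Submodule.span_le.mpr ?_
  rintro x ⟨v, w, hw, rfl⟩
  exact Submodule.subset_span ⟨v, w.mapLe hGH, hw.mapLe hGH, (Walk.walkChain_mapLe hGH w).symm⟩

lemma apply_eq_zero_of_mem_cycleSpace {x : Sym2 V → ZMod 2} (hx : x ∈ cycleSpace G) {e : Sym2 V}
    (he : e ∉ G.edgeSet) : x e = 0 := by
  induction hx using Submodule.span_induction with
  | mem x hx =>
    obtain ⟨v, w, -, rfl⟩ := hx
    simp [walkChain, show e ∉ w.edges from fun h => he (w.edges_subset_edgeSet h)]
  | zero => rfl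
  | add x y _ _ hx hy => simp [hx, hy]
  | smul a x _ hx => simp [hx]

lemma cycleSpace_le_span_sup_cycleSpace_deleteEdges {u z : V} (h : G.Adj u z) {t : G.Walk z u}
    (ht : s(u, z) ∉ t.edges) :
    cycleSpace G ≤ (ZMod 2) ∙ (Walk.cons h t).edgeChain ⊔ cycleSpace (G.deleteEdges {s(u, z)}) := by
  refine Submodule.span_le.mpr ?_
  rintro x ⟨v, c, hc, rfl⟩
  obtain ⟨q, hq⟩ := Walk.exists_edgeChain_sub_mem_span_deleteEdges h ht c
  rw [SetLike.mem_coe, Walk.walkChain_eq_edgeChain hc.isTrail,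
    ← sub_add_cancel c.edgeChain q.edgeChain]
  exact add_mem (Submodule.mem_sup_left hq) (Submodule.mem_sup_right q.edgeChain_mem_cycleSpace)

lemma IsAcyclic.cycleSpace_eq_bot (hG : G.IsAcyclic) : cycleSpace G = ⊥ :=
  Submodule.span_eq_bot.mpr fun _ ⟨_, w, hw, _⟩ => absurd hw (hG w)

structure IsCycleBasis (G : SimpleGraph V) {ι : Type*} (γ : ι → Σ v, G.Walk v v) : Prop where
  isCycle : ∀ i, (γ i).2.IsCycle
  linearIndependent : LinearIndependent (ZMod 2) fun i => walkChain (γ i).2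
  span_eq : Submodule.span (ZMod 2) (Set.range fun i => walkChain (γ i).2) = cycleSpace G

lemma IsAcyclic.isCycleBasis_elim0 (hG : G.IsAcyclic) :
    IsCycleBasis G (Fin.elim0 : Fin 0 → Σ v, G.Walk v v) where
  isCycle i := i.elim0
  linearIndependent := linearIndependent_empty_type
  span_eq := by rw [hG.cycleSpace_eq_bot, Set.range_eq_empty, Submodule.span_empty]

lemma IsCycleBasis.finCons {n : ℕ} {u z : V} {h : G.Adj u z} {t : G.Walk z u}
    (hW : (Walk.cons h t).IsCycle) {γ : Fin n → Σ v, (G.deleteEdges {s(u, z)}).Walk v v}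
    (hγ : IsCycleBasis _ γ) :
    IsCycleBasis G
      (Fin.cons ⟨u, .cons h t⟩ fun i => ⟨(γ i).1, (γ i).2.mapLe (G.deleteEdges_le _)⟩) := by
  set F : Fin (n + 1) → Σ v, G.Walk v v :=
    Fin.cons ⟨u, .cons h t⟩ fun i => ⟨(γ i).1, (γ i).2.mapLe (G.deleteEdges_le _)⟩
  have hchains : (fun i => walkChain (F i).2) =
      Fin.cons (walkChain (.cons h t)) fun i => walkChain (γ i).2 := by
    funext i
    cases i using Fin.cases
    · rfl
    · exact Walk.walkChain_mapLe _ _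
  refine ⟨Fin.cases hW fun i => (hγ.isCycle i).mapLe _, ?_, ?_⟩
  · rw [hchains, linearIndependent_finCons, hγ.span_eq]
    refine ⟨hγ.linearIndependent, fun hmem => ?_⟩
    have := apply_eq_zero_of_mem_cycleSpace hmem (e := s(u, z)) (by simp [edgeSet_deleteEdges])
    simp [walkChain] at this
  · rw [hchains, Fin.range_cons, Submodule.span_insert, hγ.span_eq]
    refine le_antisymm (sup_le ?_ (cycleSpace_mono (G.deleteEdges_le _))) ?_
    · exact (Submodule.span_singleton_le_iff_mem _ _).mpr (Submodule.subset_span ⟨u, _, hW, rfl⟩)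
    · rw [Walk.walkChain_eq_edgeChain hW.isTrail]
      exact cycleSpace_le_span_sup_cycleSpace_deleteEdges h ((Walk.cons_isCycle_iff t h).mp hW).2

/-- The conclusion of the Bollobás–Szemerédi–Thomason inequality for Betti number `b`. -/
def HasShortCycle [Finite V] (ℓ : Sym2 V → ℝ) (G : SimpleGraph V) (b : ℕ) : Prop :=
  ∃ (v : V) (w : G.Walk v v), w.IsCycle ∧ walkChain w ≠ 0 ∧
    walkLen ℓ w ≤ 4 * Real.logb 2 b / ((b : ℝ) - 1) * totalLength G ℓ

variable {ℓ : Sym2 V → ℝ}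

lemma walkLen_nonneg (hℓ : ∀ e ∈ G.edgeSet, 0 ≤ ℓ e) {u : V} (w : G.Walk u u) :
    0 ≤ walkLen ℓ w :=
  sum_nonneg fun e he => hℓ e (w.edges_subset_edgeSet (List.mem_toFinset.mp he))

lemma walkLen_le_totalLength [Finite V] (hℓ : ∀ e ∈ G.edgeSet, 0 ≤ ℓ e) {u : V}
    (w : G.Walk u u) : walkLen ℓ w ≤ totalLength G ℓ :=
  sum_le_sum_of_subset_of_nonneg
    (fun e he => by simpa using w.edges_subset_edgeSet (List.mem_toFinset.mp he))
    (fun e he _ => hℓ e (by simpa using he))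

variable [Fintype V]

lemma exists_isCycle_walkLen_mul_le (hconn : G.Connected) (hℓ : ∀ e ∈ G.edgeSet, 0 ≤ ℓ e)
    {b : ℕ} (hbetti : G.edgeSet.ncard + 1 = Fintype.card V + (b + 1))
    (hshort : 1 ≤ b → HasShortCycle ℓ G (b + 1)) :
    ∃ (u : V) (W : G.Walk u u), W.IsCycle ∧
      walkLen ℓ W * systolicConstant b ≤ systolicConstant (b + 1) * totalLength G ℓ := by
  rcases Nat.eq_zero_or_pos b with rfl | hb
  · have hcyc : ¬ G.IsAcyclic := by
      rw [hconn.isAcyclic_iff_ncard_edgeSet, Nat.card_eq_fintype_card]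
      omega
    simp only [IsAcyclic, not_forall, not_not] at hcyc
    obtain ⟨u, W, hW⟩ := hcyc
    refine ⟨u, W, hW, ?_⟩
    simpa [systolicConstant_zero, systolicConstant_one] using walkLen_le_totalLength hℓ W
  · obtain ⟨u, W, hW, -, hlen⟩ := hshort hb
    refine ⟨u, W, hW, ?_⟩
    rw [systolicConstant_succ hb]
    push_cast at hlen
    rw [add_sub_cancel_right] at hlen
    calc walkLen ℓ W * systolicConstant b
        ≤ 4 * Real.logb 2 (b + 1) / b * totalLength G ℓ * systolicConstant b :=
          mul_le_mul_of_nonneg_right hlen (systolicConstant_nonneg b)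
      _ = _ := by ring

theorem exists_isCycleBasis_prod_walkLen_le (b : ℕ) (G : SimpleGraph V) (hconn : G.Connected)
    (hℓ : ∀ e ∈ G.edgeSet, 0 ≤ ℓ e) (hbetti : G.edgeSet.ncard + 1 = Fintype.card V + b)
    (hshort : ∀ G' ≤ G, G'.Connected → ∀ b' : ℕ, 2 ≤ b' →
      G'.edgeSet.ncard + 1 = Fintype.card V + b' → HasShortCycle ℓ G' b') :
    ∃ γ : Fin b → Σ v, G.Walk v v, IsCycleBasis G γ ∧
      ∏ k, walkLen ℓ (γ k).2 ≤ systolicConstant b * totalLength G ℓ ^ b := by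
  induction b generalizing G with
  | zero =>
    have hacyc : G.IsAcyclic := by
      rw [hconn.isAcyclic_iff_ncard_edgeSet, Nat.card_eq_fintype_card]
      omega
    exact ⟨Fin.elim0, hacyc.isCycleBasis_elim0, by simp [systolicConstant_zero]⟩
  | succ b ih =>
    obtain ⟨u, W, hW, hWlen⟩ := exists_isCycle_walkLen_mul_le hconn hℓ hbetti
      fun _ => hshort G le_rfl hconn _ (by omega) hbetti
    cases W with
    | nil => exact absurd hW Walk.not_isCycle_nil
    | @cons _ z _ h t => ?_
    have hle : G.deleteEdges {s(u, z)} ≤ G := G.deleteEdges_le _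
    have hconn' : (G.deleteEdges {s(u, z)}).Connected :=
      hconn.connected_delete_edge_of_not_isBridge fun hbr =>
        hbr.notMem_edges_of_isCycle hW (by simp)
    have hbetti' : (G.deleteEdges {s(u, z)}).edgeSet.ncard + 1 = Fintype.card V + b := by
      have := ncard_edgeSet_deleteEdges_add_one (G.mem_edgeSet.mpr h)
      omega
    obtain ⟨γ, hγ, hγlen⟩ := ih _ hconn' (fun e he => hℓ e (edgeSet_mono hle he)) hbetti'
      fun G' hG' => hshort G' (hG'.trans hle)
    refine ⟨_, hγ.finCons hW, ?_⟩
    set L := totalLength G ℓ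
    rw [Fin.prod_univ_succ]
    show walkLen ℓ (.cons h t) * ∏ i, walkLen ℓ ((γ i).2.mapLe hle) ≤ _
    simp only [Walk.walkLen_mapLe]
    calc walkLen ℓ (.cons h t) * ∏ i, walkLen ℓ (γ i).2
        ≤ walkLen ℓ (.cons h t) * (systolicConstant b * L ^ b) := by
          refine mul_le_mul_of_nonneg_left (hγlen.trans ?_) (walkLen_nonneg hℓ _)
          exact mul_le_mul_of_nonneg_left (pow_le_pow_left₀
            (totalLength_nonneg fun e he => hℓ e (edgeSet_mono hle he)) (totalLength_mono hℓ hle) b)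
            (systolicConstant_nonneg b)
      _ ≤ systolicConstant (b + 1) * L * L ^ b := by
          rw [← mul_assoc]
          exact mul_le_mul_of_nonneg_right hWlen (pow_nonneg (totalLength_nonneg hℓ) b)
      _ = systolicConstant (b + 1) * L ^ (b + 1) := by ring

end SimpleGraph

theorem stmt_5_general {V : Type*} [Fintype V] [DecidableEq V] (G : SimpleGraph V)
    (hconn : G.Connected)
    (ℓ : Sym2 V → ℝ) (hpos : ∀ e ∈ G.edgeSet, 0 < ℓ e)
    (b : ℕ)
    (hbetti : G.edgeSet.ncard + 1 = Fintype.card V + b)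
    (totlen : ℝ) (htot : totlen = ∑ e ∈ G.edgeSet.toFinite.toFinset, ℓ e)
    -- the Bollobás–Szemerédi–Thomason systolic inequality, assumed for all connected
    -- subgraphs of `G` of first Betti number `b' ≥ 2`:
    (hBST : ∀ G' : SimpleGraph V, G' ≤ G → G'.Connected →
      ∀ b' : ℕ, 2 ≤ b' → G'.edgeSet.ncard + 1 = Fintype.card V + b' →
        ∃ (v : V) (w : G'.Walk v v), w.IsCycle ∧ walkChain w ≠ 0 ∧
          walkLen ℓ w ≤ 4 * Real.logb 2 b' / ((b' : ℝ) - 1) *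
            ∑ e ∈ G'.edgeSet.toFinite.toFinset, ℓ e) :
    ∃ (v : Fin b → V) (γ : ∀ k, G.Walk (v k) (v k)),
      (∀ k, (γ k).IsCycle) ∧
      LinearIndependent (ZMod 2) (fun k => walkChain (γ k)) ∧
      Submodule.span (ZMod 2) (Set.range fun k => walkChain (γ k)) = cycleSpace G ∧
      ∏ k, walkLen ℓ (γ k) ≤
        4 ^ (b - 1) / ((b - 1).factorial : ℝ) *
          (∏ k ∈ Finset.Icc 2 b, Real.logb 2 k) * totlen ^ b := by
  obtain ⟨γ, hγ, hlen⟩ := SimpleGraph.exists_isCycleBasis_prod_walkLen_le b G hconn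
    (fun e he => (hpos e he).le) hbetti hBST
  exact ⟨fun k => (γ k).1, fun k => (γ k).2, hγ.isCycle, hγ.linearIndependent, hγ.span_eq,
    htot ▸ hlen⟩

theorem stmt_5 {V : Type*} [Fintype V] [DecidableEq V] (G : SimpleGraph V)
    (hconn : G.Connected)
    (ℓ : Sym2 V → ℝ) (hpos : ∀ e ∈ G.edgeSet, 0 < ℓ e)
    (b : ℕ) (hb : 2 ≤ b)
    (hbetti : G.edgeSet.ncard + 1 = Fintype.card V + b)
    (totlen : ℝ) (htot : totlen = ∑ e ∈ G.edgeSet.toFinite.toFinset, ℓ e)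
    -- the Bollobás–Szemerédi–Thomason systolic inequality, assumed for all connected
    -- subgraphs of `G` of first Betti number `b' ≥ 2`:
    (hBST : ∀ G' : SimpleGraph V, G' ≤ G → G'.Connected →
      ∀ b' : ℕ, 2 ≤ b' → G'.edgeSet.ncard + 1 = Fintype.card V + b' →
        ∃ (v : V) (w : G'.Walk v v), w.IsCycle ∧ walkChain w ≠ 0 ∧
          walkLen ℓ w ≤ 4 * Real.logb 2 b' / ((b' : ℝ) - 1) *
            ∑ e ∈ G'.edgeSet.toFinite.toFinset, ℓ e) :
    ∃ (v : Fin b → V) (γ : ∀ k, G.Walk (v k) (v k)),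
      (∀ k, (γ k).IsCycle) ∧
      LinearIndependent (ZMod 2) (fun k => walkChain (γ k)) ∧
      Submodule.span (ZMod 2) (Set.range fun k => walkChain (γ k)) = cycleSpace G ∧
      ∏ k, walkLen ℓ (γ k) ≤
        4 ^ (b - 1) / ((b - 1).factorial : ℝ) *
          (∏ k ∈ Finset.Icc 2 b, Real.logb 2 k) * totlen ^ b :=
  stmt_5_general G hconn ℓ hpos b hbetti totlen htot hBST
end

section
/- For every positive integer n, n! > √(2πn) · (n/e)^n · e^{1/(12n+1)}. -/
/-!
Write `sₙ = n! / (√(2n) (n/e)ⁿ)`, so that `sₙ → √π`. Mathlib's series expansion gives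
`log sₙ - log sₙ₊₁ = ∑_{k ≥ 1} xᵏ / (2k + 1)` with `x = (2n + 1)⁻²`. Since `2k + 1 ≤ 3ᵏ`, strictly
for `k = 2`, this exceeds the geometric sum `∑ (x/3)ᵏ = 1 / (3 (2n + 1)² - 1)`, which in turn exceeds
`1 / (12n + 1) - 1 / (12n + 13)`. Hence `log sₙ - 1 / (12n + 1)` decreases strictly to `log √π`,
so `sₙ > √π e^{1/(12n+1)}`.
-/

open Real Filter Topology

theorem div_three_sub_lt_of_hasSum_div_odd_mul_pow {x S : ℝ} (hx₀ : 0 < x) (hx₃ : x < 3)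
    (hS : HasSum (fun k : ℕ => (1 : ℝ) / (2 * ↑(k + 1) + 1) * x ^ (k + 1)) S) :
    x / (3 - x) < S := by
  have hgeo : HasSum (fun k : ℕ => (x / 3) ^ (k + 1)) (x / 3 * (1 - x / 3)⁻¹) := by
    simpa only [← pow_succ'] using
      (hasSum_geometric_of_lt_one (by positivity) (by linarith : x / 3 < 1)).mul_left (x / 3)
  have hcoef (k : ℕ) : (2 * ↑(k + 1) + 1 : ℝ) ≤ 3 ^ (k + 1) := by
    have := one_add_mul_le_pow (by norm_num : (-2 : ℝ) ≤ 2) (k + 1)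
    norm_num at this ⊢; linarith
  have hsum : x / 3 * (1 - x / 3)⁻¹ = x / (3 - x) := by field_simp
  rw [← hsum]
  refine hasSum_lt (i := 1) (fun k => ?_) ?_ hgeo hS
  · rw [div_pow, div_mul_eq_mul_div, one_mul]
    exact div_le_div_of_nonneg_left (by positivity) (by positivity) (hcoef k)
  · rw [div_pow, div_mul_eq_mul_div, one_mul]
    exact div_lt_div_of_pos_left (by positivity) (by norm_num) (by norm_num)

namespace Stirling

theorem one_div_three_mul_sq_sub_one_lt_log_stirlingSeq_sdiff (n : ℕ) :
    1 / (3 * (2 * (n + 1 : ℝ) + 1) ^ 2 - 1) <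
      log (stirlingSeq (n + 1)) - log (stirlingSeq (n + 2)) := by
  have h := div_three_sub_lt_of_hasSum_div_odd_mul_pow (by positivity) ?_
    (log_stirlingSeq_sdiff_hasSum n)
  · convert h using 1
    push_cast
    field_simp
  · grw [← n.zero_le]; norm_num

theorem strictAnti_log_stirlingSeq_sub_one_div :
    StrictAnti fun n : ℕ => log (stirlingSeq (n + 1)) - 1 / (12 * (n + 1 : ℝ) + 1) := by
  refine strictAnti_nat_of_succ_lt fun n => ?_
  have h := one_div_three_mul_sq_sub_one_lt_log_stirlingSeq_sdiff n
  have hn : (0 : ℝ) ≤ n := n.cast_nonneg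
  have htelescope : 1 / (12 * (n + 1 : ℝ) + 1) - 1 / (12 * (n + 1 + 1 : ℝ) + 1) <
      1 / (3 * (2 * (n + 1 : ℝ) + 1) ^ 2 - 1) := by
    rw [div_sub_div _ _ (by positivity) (by positivity),
      div_lt_div_iff₀ (by positivity) (by nlinarith)]
    nlinarith
  push_cast
  linarith

theorem tendsto_log_stirlingSeq_sub_one_div :
    Tendsto (fun n : ℕ => log (stirlingSeq (n + 1)) - 1 / (12 * (n + 1 : ℝ) + 1)) atTop
      (𝓝 (log √π)) := by
  have hlog : Tendsto (fun n : ℕ => log (stirlingSeq (n + 1))) atTop (𝓝 (log √π)) :=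
    ((continuousAt_log (by positivity)).tendsto).comp
      (tendsto_stirlingSeq_sqrt_pi.comp (tendsto_add_atTop_nat 1))
  have hzero : Tendsto (fun n : ℕ => 1 / (12 * (n + 1 : ℝ) + 1)) atTop (𝓝 0) := by
    simp_rw [one_div]
    refine tendsto_inv_atTop_zero.comp (tendsto_atTop_add_const_right _ _ ?_)
    exact (tendsto_natCast_atTop_atTop.atTop_add tendsto_const_nhds).const_mul_atTop (by norm_num)
  simpa using hlog.sub hzero

theorem sqrt_pi_mul_exp_lt_stirlingSeq {n : ℕ} (hn : n ≠ 0) :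
    √π * exp (1 / (12 * n + 1)) < stirlingSeq n := by
  obtain ⟨m, rfl⟩ := Nat.exists_eq_succ_of_ne_zero hn
  have hanti := strictAnti_log_stirlingSeq_sub_one_div
  have hlt : log √π < log (stirlingSeq (m + 1)) - 1 / (12 * (m + 1 : ℝ) + 1) :=
    (hanti.antitone.le_of_tendsto tendsto_log_stirlingSeq_sub_one_div (m + 1)).trans_lt
      (hanti m.lt_succ_self)
  rw [← exp_log (stirlingSeq'_pos m), ← exp_log (by positivity : 0 < √π), ← exp_add]
  push_cast
  exact exp_lt_exp.2 (by linarith)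

end Stirling

theorem stmt_9 (n : ℕ) (hn : 0 < n) :
    Real.sqrt (2 * Real.pi * n) * ((n : ℝ) / Real.exp 1) ^ n *
      Real.exp (1 / (12 * (n : ℝ) + 1)) < (n.factorial : ℝ) := by
  have hsplit : √(2 * π * n) * (n / exp 1) ^ n * exp (1 / (12 * n + 1)) =
      √π * exp (1 / (12 * n + 1)) * (√(2 * n) * (n / exp 1) ^ n) := by
    rw [sqrt_mul' _ n.cast_nonneg, sqrt_mul' _ n.cast_nonneg, sqrt_mul' _ pi_pos.le]; ring
  rw [hsplit, ← lt_div_iff₀ (by positivity)]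
  exact Stirling.sqrt_pi_mul_exp_lt_stirlingSeq hn.ne'
end
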